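/- Let X = {0,1,…,K} with K ≥ 1 and let k ≥ 2 be an integer. The aggregate-difference family of functions (f_n : X^n → ℤ/kℤ)_{n≥1} defined by f_n(x) = (Σ_{1 ≤ i < j ≤ n} |x_i − x_j|) mod k is not computable with infinite memory. -/

import Mathlib

/-- A finite bidirectional connected network on `n` nodes, with port labelings:
each node `i` has a bijection between its neighbors and the port numbers
`{0, …, deg(i) - 1}`. -/
structure PortNetwork (n : ℕ) where
  adj : Fin n → Fin n → Bool
  symm : ∀ i j, adj i j → adj j i
  loopless : ∀ i, ¬ adj i i
  connected : ∀ i j : Fin n, Relation.ReflTransGen (fun a b => adj a b) i j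
  port : ∀ i : Fin n, {j // adj i j} ≃ Fin (Fintype.card {j // adj i j})

/-- The degree of node `i`. -/
def PortNetwork.deg {n : ℕ} (N : PortNetwork n) (i : Fin n) : ℕ :=
  Fintype.card {j // N.adj i j}

/-- An algorithm: a family of transition functions
`A_d : X × Z_d × Y × M^d → Z_d × Y × M^d`, together with the distinguished
initial ("∅") elements of `Z_d`, `Y`, `M`. -/
structure Algorithm (X Y M : Type) (Z : ℕ → Type) where
  trans : ∀ d : ℕ, X → Z d → Y → (Fin d → M) → Z d × Y × (Fin d → M)
  z0 : ∀ d, Z d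
  y0 : Y
  m0 : M

/-- The synchronous evolution of the network: `A.run N x t i` is the state
`(z_i(t), y_i(t), (m_{i,p}(t))_p)` of node `i` at time `t`, starting from
initial values `x`.  At each round, node `i` receives through its `k`-th port
the message sent by the neighbor `j_k` on that port, namely the message that
`j_k` put on its own port leading back to `i`. -/
def Algorithm.run {X Y M : Type} {Z : ℕ → Type} (A : Algorithm X Y M Z) {n : ℕ}
    (N : PortNetwork n) (x : Fin n → X) :
    ℕ → ∀ i : Fin n, Z (N.deg i) × Y × (Fin (N.deg i) → M)
  | 0 => fun _ => (A.z0 _, A.y0, fun _ => A.m0)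
  | t + 1 => fun i =>
      A.trans (N.deg i) (x i) (A.run N x t i).1 (A.run N x t i).2.1
        (fun k =>
          let j := (N.port i).symm k
          (A.run N x t j.1).2.2 (N.port j.1 ⟨i, N.symm _ _ j.2⟩))

/-- `y` is the final output of the execution of `A` on the network `N` with
initial values `x`. -/
def Algorithm.FinalOutput {X Y M : Type} {Z : ℕ → Type} (A : Algorithm X Y M Z) {n : ℕ}
    (N : PortNetwork n) (x : Fin n → X) (y : Y) : Prop :=
  ∃ t', ∀ t, t' ≤ t → ∀ i, (A.run N x t i).2.1 = y

/-- A family of functions `(f_n : X^n → Y)_{n ≥ 1}` is computable if there is an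
algorithm with `Y`, `M` and all `Z_d` finite which, on every connected network
with ports and every input, produces the final output `f_n(x)`. -/
def ComputableFamily {X Y : Type} (f : ∀ n, (Fin n → X) → Y) : Prop :=
  ∃ (M : Type) (Z : ℕ → Type) (A : Algorithm X Y M Z),
    Finite Y ∧ Finite M ∧ (∀ d, Finite (Z d)) ∧
    ∀ n, 0 < n → ∀ (N : PortNetwork n) (x : Fin n → X),
      A.FinalOutput N x (f n x)

/-- Computability with infinite memory: `Y` and the `Z_d` are allowed to be
countable (the message alphabet `M` stays finite). -/
def ComputableWithInfiniteMemory {X Y : Type} (f : ∀ n, (Fin n → X) → Y) : Prop :=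
  ∃ (M : Type) (Z : ℕ → Type) (A : Algorithm X Y M Z),
    Countable Y ∧ Finite M ∧ (∀ d, Countable (Z d)) ∧
    ∀ n, 0 < n → ∀ (N : PortNetwork n) (x : Fin n → X),
      A.FinalOutput N x (f n x)

/-!
An anonymous algorithm cannot tell a network from a network covering it: by induction on time,
each node of the cover is in the same state as its image, since it has the same input, the same
degree, and receives through each port the message its image receives. The cycle on `k (k + 2)`
nodes covers the cycle on `k + 2` nodes via `i ↦ i mod (k + 2)`. Put the input `1` on one node of
the small cycle and `0` elsewhere; the lifted input has `k` ones. A `0/1` input with `t` ones among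
`m` nodes has aggregate difference `t (m - t)`, which is `k + 1 ≡ 1` on the small cycle and
`k (k (k + 2) - k) ≡ 0` modulo `k` on the large one, so no algorithm outputs both correctly.
-/

namespace PortNetwork

variable {n n' : ℕ}

def nbr (N : PortNetwork n) (i : Fin n) (k : Fin (N.deg i)) : Fin n := ((N.port i).symm k).1

/-- The port through which `N.nbr i k` sees `i`. -/
def backPort (N : PortNetwork n) (i : Fin n) (k : Fin (N.deg i)) : Fin (N.deg (N.nbr i k)) :=
  N.port _ ⟨i, N.symm _ _ ((N.port i).symm k).2⟩

structure IsCovering (N : PortNetwork n) (N' : PortNetwork n') (φ : Fin n → Fin n') : Prop where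
  deg_eq : ∀ i, N.deg i = N'.deg (φ i)
  nbr_eq : ∀ i k, φ (N.nbr i k) = N'.nbr (φ i) (Fin.cast (deg_eq i) k)
  backPort_eq : ∀ i k, (N.backPort i k : ℕ) = N'.backPort (φ i) (Fin.cast (deg_eq i) k)

end PortNetwork

section Covering

variable {X Y M : Type} {Z : ℕ → Type}

def castState {d d' : ℕ} (h : d = d') (s : Z d × Y × (Fin d → M)) : Z d' × Y × (Fin d' → M) :=
  h ▸ s

lemma castState_output {d d' : ℕ} (h : d = d') (s : Z d × Y × (Fin d → M)) :
    (castState h s).2.1 = s.2.1 := by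
  subst h; rfl

lemma castState_msg {d d' : ℕ} (h : d = d') (s : Z d × Y × (Fin d → M)) (p : Fin d) :
    (castState h s).2.2 (Fin.cast h p) = s.2.2 p := by
  subst h; rfl

lemma castState_init (A : Algorithm X Y M Z) {d d' : ℕ} (h : d = d') :
    castState h (A.z0 d, A.y0, fun _ => A.m0) = (A.z0 d', A.y0, fun _ => A.m0) := by
  subst h; rfl

lemma castState_trans (A : Algorithm X Y M Z) {d d' : ℕ} (h : d = d') (a : X)
    (s : Z d × Y × (Fin d → M)) (m : Fin d → M) :
    castState h (A.trans d a s.1 s.2.1 m)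
      = A.trans d' a (castState h s).1 (castState h s).2.1 (fun p => m (Fin.cast h.symm p)) := by
  subst h; rfl

lemma Algorithm.run_succ (A : Algorithm X Y M Z) {n : ℕ} (N : PortNetwork n) (x : Fin n → X)
    (t : ℕ) (i : Fin n) :
    A.run N x (t + 1) i = A.trans (N.deg i) (x i) (A.run N x t i).1 (A.run N x t i).2.1
      (fun k => (A.run N x t (N.nbr i k)).2.2 (N.backPort i k)) :=
  rfl

lemma apply_eq_of_val_eq {α β : Type*} {D : α → ℕ} (f : ∀ a, Fin (D a) → β) {a b : α}
    (hab : a = b) {p : Fin (D a)} {q : Fin (D b)} (hpq : (p : ℕ) = q) : f a p = f b q := by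
  subst hab; rw [Fin.ext hpq]

variable {n n' : ℕ} {N : PortNetwork n} {N' : PortNetwork n'} {φ : Fin n → Fin n'}

theorem Algorithm.castState_run_of_isCovering (A : Algorithm X Y M Z) (hφ : N.IsCovering N' φ)
    (x : Fin n' → X) (t : ℕ) (i : Fin n) :
    castState (hφ.deg_eq i) (A.run N (x ∘ φ) t i) = A.run N' x t (φ i) := by
  induction t generalizing i with
  | zero => exact castState_init A _
  | succ t ih =>
    rw [A.run_succ, A.run_succ, castState_trans, ih]
    congr 1
    funext p
    set k := Fin.cast (hφ.deg_eq i).symm p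
    rw [← castState_msg (hφ.deg_eq _), ih]
    refine apply_eq_of_val_eq (fun j => (A.run N' x t j).2.2) ?_ ?_
    · simpa [k] using hφ.nbr_eq i k
    · simpa [k] using hφ.backPort_eq i k

theorem Algorithm.FinalOutput.eq_of_isCovering {A : Algorithm X Y M Z} {x : Fin n' → X} {y y' : Y}
    (hφ : N.IsCovering N' φ) (hn : 0 < n) (h : A.FinalOutput N (x ∘ φ) y)
    (h' : A.FinalOutput N' x y') : y = y' := by
  obtain ⟨t, ht⟩ := h
  obtain ⟨t', ht'⟩ := h'
  let i : Fin n := ⟨0, hn⟩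
  calc y = (A.run N (x ∘ φ) (max t t') i).2.1 := (ht _ (le_max_left _ _) i).symm
    _ = (A.run N' x (max t t') (φ i)).2.1 := by
      rw [← A.castState_run_of_isCovering hφ, castState_output]
    _ = y' := ht' _ (le_max_right _ _) _

theorem ComputableWithInfiniteMemory.eq_of_isCovering {f : ∀ n, (Fin n → X) → Y}
    (hf : ComputableWithInfiniteMemory f) (hφ : N.IsCovering N' φ) (hn : 0 < n)
    (x : Fin n' → X) : f n (x ∘ φ) = f n' x := by
  obtain ⟨M, Z, A, -, -, -, hA⟩ := hf
  exact (hA n hn N (x ∘ φ)).eq_of_isCovering hφ hn (hA n' (φ ⟨0, hn⟩).pos N' x)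

end Covering

section FinRing

open scoped Fin.CommRing

lemma Fin.add_one_ne_sub_one {n : ℕ} [NeZero n] (hn : 3 ≤ n) (i : Fin n) : i + 1 ≠ i - 1 := by
  intro h
  have h2 : (2 : Fin n) = 0 := by linear_combination h
  have := congrArg Fin.val h2
  simp [Nat.mod_eq_of_lt (show 2 < n by omega)] at this

lemma Fin.modNat_add_one {m n : ℕ} [NeZero n] [NeZero (m * n)] (i : Fin (m * n)) :
    (i + 1).modNat = i.modNat + 1 := by
  ext
  simp only [Fin.modNat, Fin.val_add, Fin.val_one']
  rw [Nat.mod_mod_of_dvd _ (dvd_mul_left n m), Nat.add_mod, Nat.mod_mod_of_dvd _ (dvd_mul_left n m)]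

lemma Fin.card_filter_modNat_eq {m n : ℕ} (b : Fin n) :
    (Finset.univ.filter fun i : Fin (m * n) => i.modNat = b).card = m := by
  have hfiber : {i : Fin (m * n) // i.modNat = b} ≃ {p : Fin m × Fin n // p.2 = b} :=
    finProdFinEquiv.symm.subtypeEquiv fun _ => Iff.rfl
  have hprod : (Finset.univ.filter fun p : Fin m × Fin n => p.2 = b) = Finset.univ ×ˢ {b} := by
    ext ⟨a, c⟩
    simp only [Finset.mem_filter, Finset.mem_univ, true_and, Finset.mem_product,
      Finset.mem_singleton]
  rw [← Fintype.card_subtype, Fintype.card_congr hfiber, Fintype.card_subtype, hprod,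
    Finset.card_product, Finset.card_univ, Fintype.card_fin, Finset.card_singleton, mul_one]

end FinRing

namespace PortNetwork

open scoped Fin.CommRing

variable {n : ℕ} [NeZero n]

def cycleAdj (i j : Fin n) : Bool := decide (j = i + 1 ∨ j = i - 1)

def cyclePort (i : Fin n) : Fin 2 → {j // cycleAdj i j} :=
  ![⟨i + 1, by simp [cycleAdj]⟩, ⟨i - 1, by simp [cycleAdj]⟩]

lemma cyclePort_bijective (hn : 3 ≤ n) (i : Fin n) : Function.Bijective (cyclePort i) := by
  constructor
  · intro a b hab
    fin_cases a <;> fin_cases b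
    all_goals first
      | rfl
      | exact absurd (congrArg Subtype.val hab) (Fin.add_one_ne_sub_one hn i)
      | exact absurd (congrArg Subtype.val hab).symm (Fin.add_one_ne_sub_one hn i)
  · rintro ⟨j, hj⟩
    rcases (by simpa [cycleAdj] using hj : j = i + 1 ∨ j = i - 1) with rfl | rfl
    · exact ⟨0, rfl⟩
    · exact ⟨1, rfl⟩

lemma card_cycleAdj (hn : 3 ≤ n) (i : Fin n) : Fintype.card {j // cycleAdj i j} = 2 := by
  rw [← Fintype.card_fin 2]
  exact (Fintype.card_of_bijective (cyclePort_bijective hn i)).symm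

noncomputable def cycle (hn : 3 ≤ n) : PortNetwork n where
  adj := cycleAdj
  symm i j h := by
    simp only [cycleAdj, decide_eq_true_eq] at h ⊢
    rcases h with rfl | rfl
    · right; ring
    · left; ring
  loopless i h := by
    have h1 : (1 : Fin n) = 0 := by
      simp only [cycleAdj, decide_eq_true_eq] at h
      rcases h with h | h
      · linear_combination -h
      · linear_combination h
    simpa [Nat.mod_eq_of_lt (show 1 < n by omega)] using congrArg Fin.val h1
  connected i j := by
    have key : ∀ t : ℕ, Relation.ReflTransGen (fun a b => cycleAdj a b) i (i + t) := by
      intro t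
      induction t with
      | zero => simpa using .refl
      | succ t ih => exact ih.tail (by simp [cycleAdj, add_assoc])
    simpa using key (j - i).val
  port i := (Equiv.ofBijective _ (cyclePort_bijective hn i)).symm.trans
    (finCongr (card_cycleAdj hn i).symm)

lemma cycle_deg (hn : 3 ≤ n) (i : Fin n) : (cycle hn).deg i = 2 := card_cycleAdj hn i

lemma cycle_nbr (hn : 3 ≤ n) (i : Fin n) (k : Fin ((cycle hn).deg i)) :
    (cycle hn).nbr i k = if (k : ℕ) = 0 then i + 1 else i - 1 := by
  change (cyclePort i (Fin.cast (cycle_deg hn i) k)).1 = _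
  obtain ⟨p, hp⟩ : ∃ p, Fin.cast (cycle_deg hn i) k = p := ⟨_, rfl⟩
  have hk : (k : ℕ) = p := by rw [← hp, Fin.val_cast]
  rw [hp, hk]
  fin_cases p <;> rfl

lemma cycle_port_val (hn : 3 ≤ n) (j i : Fin n) (h : (cycle hn).adj j i) :
    ((cycle hn).port j ⟨i, h⟩ : ℕ) = if i = j + 1 then 0 else 1 := by
  change ((Equiv.ofBijective _ (cyclePort_bijective hn j)).symm ⟨i, h⟩ : ℕ) = _
  rcases (by simpa [cycle, cycleAdj] using h : i = j + 1 ∨ i = j - 1) with rfl | rfl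
  · change ((Equiv.ofBijective _ (cyclePort_bijective hn j)).symm (cyclePort j 0) : ℕ) = _
    simp
  · change ((Equiv.ofBijective _ (cyclePort_bijective hn j)).symm (cyclePort j 1) : ℕ) = _
    simp [(Fin.add_one_ne_sub_one hn j).symm]

lemma cycle_backPort (hn : 3 ≤ n) (i : Fin n) (k : Fin ((cycle hn).deg i)) :
    ((cycle hn).backPort i k : ℕ) = if (k : ℕ) = 0 then 1 else 0 := by
  rw [backPort, cycle_port_val, cycle_nbr]
  split_ifs with hk h h
  · exact absurd (by rw [add_sub_cancel_right]; exact h.symm) (Fin.add_one_ne_sub_one hn (i + 1))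
  · rfl
  · rfl
  · exact absurd (sub_add_cancel i 1).symm h

theorem cycle_isCovering {n' : ℕ} [NeZero n'] (hn : 3 ≤ n) (hn' : 3 ≤ n') (φ : Fin n → Fin n')
    (hφ : ∀ i, φ (i + 1) = φ i + 1) : (cycle hn).IsCovering (cycle hn') φ where
  deg_eq i := by rw [cycle_deg, cycle_deg]
  nbr_eq i k := by
    have hφ' : φ (i - 1) = φ i - 1 := by
      rw [eq_sub_iff_add_eq, ← hφ, sub_add_cancel]
    rw [cycle_nbr, cycle_nbr, Fin.val_cast]
    split_ifs
    · exact hφ i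
    · exact hφ'
  backPort_eq i k := by rw [cycle_backPort, cycle_backPort, Fin.val_cast]

end PortNetwork

section AggregateDifference

open Finset

lemma two_nsmul_sum_filter_lt {ι M : Type*} [Fintype ι] [LinearOrder ι] [AddCommMonoid M]
    (g : ι × ι → M) (hsymm : ∀ p, g p.swap = g p) (hdiag : ∀ i, g (i, i) = 0) :
    2 • ∑ p ∈ univ.filter (fun p : ι × ι => p.1 < p.2), g p = ∑ p, g p := by
  have hsplit : ∀ p : ι × ι,
      (if p.1 < p.2 then g p else 0) + (if p.2 < p.1 then g p else 0) = g p := by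
    rintro ⟨i, j⟩
    rcases lt_trichotomy i j with h | rfl | h
    · simp [h, h.not_gt]
    · simp [hdiag]
    · simp [h, h.not_gt]
  have hswap : ∑ p : ι × ι, (if p.2 < p.1 then g p else 0)
      = ∑ p : ι × ι, (if p.1 < p.2 then g p else 0) :=
    Fintype.sum_equiv (Equiv.prodComm ι ι) _ _ fun p => by simp [hsymm]
  calc 2 • ∑ p ∈ univ.filter (fun p : ι × ι => p.1 < p.2), g p
      = ∑ p, (if p.1 < p.2 then g p else 0) + ∑ p, (if p.2 < p.1 then g p else 0) := by
        rw [hswap, two_nsmul, Finset.sum_filter]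
    _ = ∑ p, g p := by
        rw [← Finset.sum_add_distrib]
        exact Finset.sum_congr rfl fun p _ => hsplit p

lemma sum_filter_lt_natAbs_sub_of_indicator {ι : Type*} [Fintype ι] [LinearOrder ι]
    (T : Finset ι) (a : ι → ℤ) (ha : ∀ i, a i = if i ∈ T then 1 else 0) :
    ∑ p ∈ univ.filter (fun p : ι × ι => p.1 < p.2), (a p.1 - a p.2).natAbs
      = #T * (Fintype.card ι - #T) := by
  have hpoint : ∀ p : ι × ι, (a p.1 - a p.2).natAbs
      = (if p ∈ T ×ˢ Tᶜ then 1 else 0) + (if p ∈ Tᶜ ×ˢ T then 1 else 0) := by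
    rintro ⟨i, j⟩
    by_cases hi : i ∈ T <;> by_cases hj : j ∈ T <;> simp [ha, hi, hj]
  have htotal : ∑ p : ι × ι, (a p.1 - a p.2).natAbs = #(T ×ˢ Tᶜ) + #(Tᶜ ×ˢ T) := by
    rw [Finset.sum_congr rfl fun p _ => hpoint p, Finset.sum_add_distrib, Finset.sum_boole,
      Finset.sum_boole, Finset.filter_mem_eq_inter, Finset.filter_mem_eq_inter,
      Finset.univ_inter, Finset.univ_inter, Nat.cast_id, Nat.cast_id]
  have hhalf := two_nsmul_sum_filter_lt (fun p : ι × ι => (a p.1 - a p.2).natAbs)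
    (fun p => by rw [Prod.fst_swap, Prod.snd_swap, ← Int.natAbs_neg, neg_sub]) (fun i => by simp)
  rw [htotal, Finset.card_product, Finset.card_product, Finset.card_compl, smul_eq_mul] at hhalf
  linarith

end AggregateDifference

/-- the aggregate difference `(Σ_{i<j} |x_i - x_j|) mod k` is not
computable with infinite memory. -/
theorem aggregate_difference_not_computable (K k : ℕ) (hK : 1 ≤ K) (hk : 2 ≤ k) :
    ¬ ComputableWithInfiniteMemory
      (fun n (x : Fin n → Fin (K + 1)) =>
        (((∑ p ∈ Finset.univ.filter (fun p : Fin n × Fin n => p.1 < p.2),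
            ((x p.1 : ℤ) - (x p.2 : ℤ)).natAbs) : ℕ) : ZMod k)) := by
  intro hf
  have : NeZero (k * (k + 2)) := ⟨by positivity⟩
  let x : Fin (k + 2) → Fin (K + 1) := fun i => if i = 0 then ⟨1, by omega⟩ else 0
  have hx : ∀ i, ((x i : ℕ) : ℤ) = if i ∈ ({0} : Finset (Fin (k + 2))) then 1 else 0 := by
    intro i
    by_cases h : i = 0 <;> simp [x, h]
  have hlift : ∀ i : Fin (k * (k + 2)), (((x ∘ Fin.modNat) i : ℕ) : ℤ)
      = if i ∈ Finset.univ.filter (fun i : Fin (k * (k + 2)) => i.modNat = 0) then 1 else 0 := by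
    intro i
    simpa using hx i.modNat
  have hcov := hf.eq_of_isCovering
    (PortNetwork.cycle_isCovering (by nlinarith) (by omega) Fin.modNat Fin.modNat_add_one)
    (by positivity) x
  rw [sum_filter_lt_natAbs_sub_of_indicator _ _ hlift,
    sum_filter_lt_natAbs_sub_of_indicator _ _ hx, Fin.card_filter_modNat_eq, Finset.card_singleton, Fintype.card_fin, Fintype.card_fin,
    ZMod.natCast_eq_natCast_iff', Nat.mul_mod_right, show 1 * (k + 2 - 1) = k + 1 by omega,
    Nat.add_mod_left, Nat.mod_eq_of_lt hk] at hcov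
  exact zero_ne_one hcov
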